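/- arXiv:1802.04775 — 3 statements merged into one kernel-verified Lean document; each statement's English description precedes it below -/
import Mathlib

section
/- Let h, I, λ, P_T be positive real numbers and define f : ℝ → ℝ by f(x) = ln(1 + h·x/I) − λ·x. Let x_tmp = 1/λ − I/h and let x* = P_T − max(P_T − max(x_tmp, 0), 0). Then x* ∈ [0, P_T] and for every x ∈ [0, P_T] one has f(x) ≤ f(x*); that is, x* is a global maximizer of f on [0, P_T]. (This is Theorem 1: the follower SUE's optimal transmit power, for fixed interference-plus-noise power I, is the clipped water-filling value.) -/
/-- Theorem 1 of the paper: the follower SUE's optimal transmit power on `[0, P_T]`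
is the clipped water-filling value `x* = P_T - (P_T - (x_tmp)⁺)⁺`. -/
theorem follower_optimal_power
    (h I lam PT : ℝ) (hh : 0 < h) (hI : 0 < I) (hlam : 0 < lam) (hPT : 0 < PT)
    (f : ℝ → ℝ) (hf : ∀ x, f x = Real.log (1 + h * x / I) - lam * x)
    (xtmp xstar : ℝ) (hxtmp : xtmp = 1 / lam - I / h)
    (hxstar : xstar = PT - max (PT - max xtmp 0) 0) :
    xstar ∈ Set.Icc 0 PT ∧ ∀ x ∈ Set.Icc 0 PT, f x ≤ f xstar := by
  have hmin : xstar = min PT (max xtmp 0) := by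
    rcases le_total (PT - max xtmp 0) 0 with hc | hc
    · rw [hxstar, max_eq_right hc, min_eq_left (by linarith)]; ring
    · rw [hxstar, max_eq_left hc, min_eq_right (by linarith)]; ring
  have hx0 : 0 ≤ xstar := by
    rw [hmin]; exact le_min hPT.le (le_max_right _ _)
  have hxPT : xstar ≤ PT := by rw [hmin]; exact min_le_left _ _
  refine ⟨⟨hx0, hxPT⟩, ?_⟩
  intro x hx
  obtain ⟨hx1, hx2⟩ := hx
  have hden : 0 < I + h * xstar := by positivity
  have hpos : ∀ y : ℝ, 0 ≤ y → 0 < 1 + h * y / I := by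
    intro y hy; positivity
  have hp1 := hpos x hx1
  have hp2 := hpos xstar hx0
  -- concavity bound
  have key : f x - f xstar ≤ (x - xstar) * (h / (I + h * xstar) - lam) := by
    have hlog : Real.log (1 + h * x / I) - Real.log (1 + h * xstar / I)
        ≤ (x - xstar) * (h / (I + h * xstar)) := by
      rw [← Real.log_div hp1.ne' hp2.ne']
      have := Real.log_le_sub_one_of_pos (div_pos hp1 hp2)
      calc Real.log ((1 + h * x / I) / (1 + h * xstar / I))
          ≤ (1 + h * x / I) / (1 + h * xstar / I) - 1 := this
        _ = (x - xstar) * (h / (I + h * xstar)) := by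
            field_simp
            ring
    rw [hf, hf]
    nlinarith [hlog]
  have hfac : (x - xstar) * (h / (I + h * xstar) - lam) ≤ 0 := by
    rcases le_total xtmp 0 with ht | ht
    · -- xstar = 0, h/I ≤ lam
      have hxs : xstar = 0 := by
        rw [hmin, max_eq_right ht, min_eq_right hPT.le]
      have hle : h / I ≤ lam := by
        rw [div_le_iff₀ hI]
        have : 1 / lam ≤ I / h := by linarith [hxtmp ▸ ht]
        rw [div_le_div_iff₀ hlam hh] at this
        linarith
      rw [hxs]
      have : h / (I + h * 0) - lam ≤ 0 := by
        rw [mul_zero, add_zero]; linarith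
      nlinarith
    · rcases le_total xtmp PT with ht2 | ht2
      · -- xstar = xtmp, factor = 0
        have hxs : xstar = xtmp := by
          rw [hmin, max_eq_left ht, min_eq_right ht2]
        have : I + h * xstar = h / lam := by
          rw [hxs, hxtmp]
          field_simp
          ring
        rw [this]
        have : h / (h / lam) = lam := by
          field_simp
        rw [this, sub_self, mul_zero]
      · -- xstar = PT, factor ≥ 0, x ≤ PT
        have hxs : xstar = PT := by
          rw [hmin, max_eq_left ht, min_eq_left ht2]
        have hge : lam ≤ h / (I + h * PT) := by
          rw [le_div_iff₀ (by positivity)]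
          have h1 : PT + I / h ≤ 1 / lam := by linarith [hxtmp ▸ ht2]
          have h2 : lam * (PT + I / h) ≤ 1 := by
            calc lam * (PT + I / h) ≤ lam * (1 / lam) := by
                  exact mul_le_mul_of_nonneg_left h1 hlam.le
              _ = 1 := by field_simp
          have h3 : lam * (PT + I / h) * h ≤ h := by nlinarith
          calc lam * (I + h * PT) = lam * (PT + I / h) * h := by
                rw [mul_assoc, add_mul, div_mul_cancel₀ _ hh.ne']; ring
            _ ≤ h := h3
        rw [hxs]
        have hxle : x - PT ≤ 0 := by linarith
        nlinarith
  linarith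
end

section
/- Let A, H, λ₀ be positive real numbers and B a real number, and define g(P) = ln(1 + H·P/(A − B·P)) − λ₀·P. Set C₁ = λ₀·B·(H − B), C₂ = λ₀·A·(2B − H), C₃ = A·H − λ₀·A². If C₁ ≠ 0 and C₂² − 4·C₁·C₃ < 0, then for any 0 ≤ P_min ≤ P_max with A − B·P_max > 0 and A − B·P_min > 0, g is strictly monotone on [P_min, P_max] and hence for every P ∈ [P_min, P_max], g(P) ≤ max(g(P_min), g(P_max)). (This is the negative-discriminant case of Theorem 2: the optimum lies at an endpoint of the feasible interval.) -/
/-!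
Writing `u = A + (H - B) P` and `v = A - B P`, one has `1 + H P / v = u / v` and
`g'(P) = H A / (u v) - λ₀ = (C₁ P² + C₂ P + C₃) / (u v)`. On the feasible interval `u, v > 0`,
and a negative discriminant means the numerator never vanishes, so `g'` has no zero there.
By Darboux's theorem `g'` then has constant sign, so `g` is strictly monotone and its
maximum sits at an endpoint.
-/

open Set

theorem quadratic_ne_zero_of_discrim_neg {K : Type*} [CommRing K] [LinearOrder K]
    [IsStrictOrderedRing K] {a b c : K} (h : discrim a b c < 0) (x : K) :
    a * (x * x) + b * x + c ≠ 0 :=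
  quadratic_ne_zero_of_discrim_ne_sq (fun s hs => (h.trans_le (sq_nonneg s)).ne hs) x

theorem strictMonoOn_or_strictAntiOn_of_hasDerivAt_ne_zero {s : Set ℝ} (hs : Convex ℝ s)
    {f f' : ℝ → ℝ} (hf : ∀ x ∈ s, HasDerivAt f (f' x) x) (hf' : ∀ x ∈ s, f' x ≠ 0) :
    StrictMonoOn f s ∨ StrictAntiOn f s := by
  have hcont : ContinuousOn f s := fun x hx => (hf x hx).continuousAt.continuousWithinAt
  have hf_int : ∀ x ∈ interior s, HasDerivWithinAt f (f' x) (interior s) x :=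
    fun x hx => (hf x (interior_subset hx)).hasDerivWithinAt
  rcases hasDerivWithinAt_forall_lt_or_forall_gt_of_forall_ne hs
      (fun x hx => (hf x hx).hasDerivWithinAt) hf' with hneg | hpos
  · exact Or.inr <| strictAntiOn_of_hasDerivWithinAt_neg hs hcont hf_int
      fun x hx => hneg x (interior_subset hx)
  · exact Or.inl <| strictMonoOn_of_hasDerivWithinAt_pos hs hcont hf_int
      fun x hx => hpos x (interior_subset hx)

theorem le_max_of_strictMonoOn_or_strictAntiOn {f : ℝ → ℝ} {a b x : ℝ} (hab : a ≤ b)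
    (hf : StrictMonoOn f (Icc a b) ∨ StrictAntiOn f (Icc a b)) (hx : x ∈ Icc a b) :
    f x ≤ max (f a) (f b) := by
  rcases hf with hmono | hanti
  · exact (hmono.monotoneOn hx (right_mem_Icc.2 hab) hx.2).trans (le_max_right _ _)
  · exact (hanti.antitoneOn (left_mem_Icc.2 hab) hx hx.1).trans (le_max_left _ _)

theorem sub_mul_pos_of_mem_Icc {A B a b x : ℝ} (ha : 0 < A - B * a) (hb : 0 < A - B * b)
    (hx : x ∈ Icc a b) : 0 < A - B * x := by
  obtain ⟨hax, hxb⟩ := hx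
  rcases le_total 0 B with hB | hB <;> nlinarith

theorem hasDerivAt_log_one_add_div_sub {A B H lam0 P : ℝ} (hv : A - B * P ≠ 0)
    (hu : A + (H - B) * P ≠ 0) :
    HasDerivAt (fun P => Real.log (1 + H * P / (A - B * P)) - lam0 * P)
      ((lam0 * B * (H - B) * (P * P) + lam0 * A * (2 * B - H) * P + (A * H - lam0 * A ^ 2))
        / ((A + (H - B) * P) * (A - B * P))) P := by
  have hratio : 1 + H * P / (A - B * P) = (A + (H - B) * P) / (A - B * P) := by
    rw [one_add_div hv]
    ring
  have hden : HasDerivAt (fun P => A - B * P) (-B) P := by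
    simpa using ((hasDerivAt_id' P).const_mul B).const_sub A
  have hquot : HasDerivAt (fun P => H * P / (A - B * P)) (H * A / (A - B * P) ^ 2) P :=
    (((hasDerivAt_id' P).const_mul H).div hden hv).congr_deriv (by ring)
  have hlog := (hquot.const_add 1).log (by rw [hratio]; exact div_ne_zero hu hv)
  refine (hlog.sub ((hasDerivAt_id' P).const_mul lam0)).congr_deriv ?_
  rw [hratio]
  set u := A + (H - B) * P with hu_def
  set v := A - B * P with hv_def
  field_simp
  rw [hu_def, hv_def]
  ring

theorem leader_optimum_endpoints_of_neg_disc_general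
    (A H lam0 : ℝ) (B : ℝ) (hH : 0 < H)
    (g : ℝ → ℝ) (hg : ∀ P, g P = Real.log (1 + H * P / (A - B * P)) - lam0 * P)
    (C1 C2 C3 : ℝ)
    (hC1 : C1 = lam0 * B * (H - B))
    (hC2 : C2 = lam0 * A * (2 * B - H))
    (hC3 : C3 = A * H - lam0 * A ^ 2)
    (hdisc : C2 ^ 2 - 4 * C1 * C3 < 0)
    (Pmin Pmax : ℝ) (h0 : 0 ≤ Pmin) (hle : Pmin ≤ Pmax)
    (hAmax : 0 < A - B * Pmax) (hAmin : 0 < A - B * Pmin) :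
    (StrictMonoOn g (Set.Icc Pmin Pmax) ∨ StrictAntiOn g (Set.Icc Pmin Pmax)) ∧
    ∀ P ∈ Set.Icc Pmin Pmax, g P ≤ max (g Pmin) (g Pmax) := by
  obtain rfl : g = fun P => Real.log (1 + H * P / (A - B * P)) - lam0 * P := funext hg
  subst hC1 hC2 hC3
  have hv : ∀ x ∈ Icc Pmin Pmax, 0 < A - B * x := fun x hx =>
    sub_mul_pos_of_mem_Icc hAmin hAmax hx
  have hu : ∀ x ∈ Icc Pmin Pmax, 0 < A + (H - B) * x := fun x hx => by
    nlinarith [hv x hx, mul_nonneg hH.le (h0.trans hx.1)]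
  have hderiv_ne : ∀ x ∈ Icc Pmin Pmax,
      (lam0 * B * (H - B) * (x * x) + lam0 * A * (2 * B - H) * x + (A * H - lam0 * A ^ 2))
        / ((A + (H - B) * x) * (A - B * x)) ≠ 0 := fun x hx =>
    div_ne_zero (quadratic_ne_zero_of_discrim_neg hdisc x)
      (mul_pos (hu x hx) (hv x hx)).ne'
  have hmono := strictMonoOn_or_strictAntiOn_of_hasDerivAt_ne_zero (convex_Icc Pmin Pmax)
    (fun x hx => hasDerivAt_log_one_add_div_sub (hv x hx).ne' (hu x hx).ne') hderiv_ne
  exact ⟨hmono, fun P hP => le_max_of_strictMonoOn_or_strictAntiOn hle hmono hP⟩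

/-- Negative-discriminant case of Theorem 2: if the quadratic (33) has no real root,
the leader's objective is strictly monotone on the feasible interval and the optimum
is attained at an endpoint. -/
theorem leader_optimum_endpoints_of_neg_disc
    (A H lam0 : ℝ) (B : ℝ) (hA : 0 < A) (hH : 0 < H) (hlam0 : 0 < lam0)
    (g : ℝ → ℝ) (hg : ∀ P, g P = Real.log (1 + H * P / (A - B * P)) - lam0 * P)
    (C1 C2 C3 : ℝ)
    (hC1 : C1 = lam0 * B * (H - B))
    (hC2 : C2 = lam0 * A * (2 * B - H))
    (hC3 : C3 = A * H - lam0 * A ^ 2)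
    (hC1ne : C1 ≠ 0) (hdisc : C2 ^ 2 - 4 * C1 * C3 < 0)
    (Pmin Pmax : ℝ) (h0 : 0 ≤ Pmin) (hle : Pmin ≤ Pmax)
    (hAmax : 0 < A - B * Pmax) (hAmin : 0 < A - B * Pmin) :
    (StrictMonoOn g (Set.Icc Pmin Pmax) ∨ StrictAntiOn g (Set.Icc Pmin Pmax)) ∧
    ∀ P ∈ Set.Icc Pmin Pmax, g P ≤ max (g Pmin) (g Pmax) :=
  leader_optimum_endpoints_of_neg_disc_general A H lam0 B hH g hg C1 C2 C3 hC1 hC2 hC3 hdisc Pmin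
    Pmax h0 hle hAmax hAmin
end

section
/- Let K be a positive integer, W a K × K real matrix with max_{1 ≤ k ≤ K} Σ_{k'=1}^{K} |W_{kk'}| = q < 1, c ∈ ℝ^K, and P_T > 0. Define Φ : ℝ^K → ℝ^K componentwise by Φ(p)_k = min(P_T, max(0, c_k − Σ_{k'} W_{kk'}·p_{k'})). Then for all p, p' ∈ ℝ^K, ‖Φ(p) − Φ(p')‖_∞ ≤ q·‖p − p'‖_∞ (sup norm), and consequently Φ has a unique fixed point p* ∈ ℝ^K, which moreover satisfies 0 ≤ p*_k ≤ P_T for all k. (This establishes convergence of the constrained inner iteration and the uniqueness of the Nash equilibrium of the followers' subgame asserted in Theorems 3 and 4.) -/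
lemma abs_min_sub_min (a x y : ℝ) : |min a x - min a y| ≤ |x - y| := by
  have h := abs_max_sub_max_le_abs (-x) (-y) (-a)
  rw [max_neg_neg, max_neg_neg] at h
  have e1 : -(x ⊓ a) - -(y ⊓ a) = -(min a x - min a y) := by
    rw [min_comm a x, min_comm a y]; ring
  have e2 : -x - -y = -(x - y) := by ring
  rwa [e1, e2, abs_neg, abs_neg] at h

lemma clip_lipschitz (PT x y : ℝ) :
    |min PT (max 0 x) - min PT (max 0 y)| ≤ |x - y| := by
  refine (abs_min_sub_min PT _ _).trans ?_
  have := abs_max_sub_max_le_abs x y 0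
  rwa [max_comm x 0, max_comm y 0] at this

/-- Convergence of the constrained inner iteration and uniqueness of the Nash
equilibrium of the followers' subgame (Theorems 3 and 4): if the maximal absolute
row sum of `W` is `q < 1`, the clipped best-response map `Φ` is a `q`-contraction
in the sup norm, hence has a unique fixed point, which lies in `[0, P_T]^K`. -/
theorem clipped_best_response_contraction
    (K : ℕ) (hK : 0 < K) (W : Matrix (Fin K) (Fin K) ℝ) (c : Fin K → ℝ)
    (PT q : ℝ) (hPT : 0 < PT)
    (hq : IsGreatest (Set.range fun k => ∑ k', |W k k'|) q) (hq1 : q < 1)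
    (Φ : (Fin K → ℝ) → (Fin K → ℝ))
    (hΦ : ∀ p k, Φ p k = min PT (max 0 (c k - ∑ k', W k k' * p k'))) :
    (∀ p p' : Fin K → ℝ, ‖Φ p - Φ p'‖ ≤ q * ‖p - p'‖) ∧
    (∃! pstar : Fin K → ℝ, Φ pstar = pstar) ∧
    ∀ pstar : Fin K → ℝ, Φ pstar = pstar → ∀ k, pstar k ∈ Set.Icc 0 PT := by
  have hq0 : 0 ≤ q := by
    obtain ⟨k, hk⟩ := hq.1
    rw [← hk]
    exact Finset.sum_nonneg fun _ _ => abs_nonneg _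
  have hcontr : ∀ p p' : Fin K → ℝ, ‖Φ p - Φ p'‖ ≤ q * ‖p - p'‖ := by
    intro p p'
    apply pi_norm_le_iff_of_nonneg (by positivity) |>.2
    intro k
    have hWk : (∑ k', |W k k'|) ≤ q := hq.2 ⟨k, rfl⟩
    calc ‖(Φ p - Φ p') k‖ = |Φ p k - Φ p' k| := rfl
      _ ≤ |(c k - ∑ k', W k k' * p k') - (c k - ∑ k', W k k' * p' k')| := by
          rw [hΦ p k, hΦ p' k]; exact clip_lipschitz _ _ _
      _ = |∑ k', W k k' * (p' k' - p k')| := by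
          simp only [mul_sub, Finset.sum_sub_distrib]
          congr 1; ring
      _ ≤ ∑ k', |W k k' * (p' k' - p k')| := Finset.abs_sum_le_sum_abs _ _
      _ ≤ ∑ k', |W k k'| * ‖p - p'‖ := by
          apply Finset.sum_le_sum
          intro i _
          rw [abs_mul]
          apply mul_le_mul_of_nonneg_left _ (abs_nonneg _)
          have : |p' i - p i| = ‖(p - p') i‖ := by
            simp [Pi.sub_apply, abs_sub_comm]
          rw [this]
          exact norm_le_pi_norm (p - p') i
      _ = (∑ k', |W k k'|) * ‖p - p'‖ := by rw [← Finset.sum_mul]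
      _ ≤ q * ‖p - p'‖ := by
          exact mul_le_mul_of_nonneg_right hWk (norm_nonneg _)
  refine ⟨hcontr, ?_, ?_⟩
  · have hlip : LipschitzWith q.toNNReal Φ := by
      apply LipschitzWith.of_dist_le_mul
      intro p p'
      rw [Real.coe_toNNReal q hq0, dist_eq_norm, dist_eq_norm]
      exact hcontr p p'
    have hcw : ContractingWith q.toNNReal Φ := ⟨by
      rw [← NNReal.coe_lt_one, Real.coe_toNNReal q hq0]; exact hq1, hlip⟩
    exact ⟨hcw.fixedPoint, hcw.fixedPoint_isFixedPt,
      fun y hy => hcw.fixedPoint_unique hy⟩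
  · intro pstar hfix k
    have : pstar k = min PT (max 0 (c k - ∑ k', W k k' * pstar k')) := by
      rw [← hΦ pstar k, hfix]
    constructor
    · rw [this]; exact le_min hPT.le (le_max_left _ _)
    · rw [this]; exact min_le_left _ _
end
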